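/- arXiv:1801.02756 — 8 statements merged into one kernel-verified Lean document; each statement's English description precedes it below -/
import Mathlib

section
/- Let (Λ, L) satisfy the spinor consistency relations. Define γ̄^B = Σ_C Λ_C{}^B γ^C for B = 0,1,2,3, γ̄⁵ = L γ⁵ L⁻¹, and Σ̄^A = γ̄⁵ γ̄⁰ γ̄^A for A = 1,2,3. Then for every vector Ψ ∈ ℂ⁴ and every A ∈ {1,2,3}: Σ^A Ψ = Ψ if and only if Σ̄^A (LΨ) = LΨ. -/
/-!
The Lorentz condition `Λᵀ η Λ = η` says that the matrix `Λ_C{}^B`, transposed, is the inverse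
of `Λ^A{}_B`. Inverting the consistency relation `L⁻¹ γ^A L = Λ^A{}_B γ^B` therefore gives
`γ̄^B = L γ^B L⁻¹`, so `Σ̄^A = L Σ^A L⁻¹`, and the invertible `L` maps the `+1`-eigenvectors of
`Σ^A` exactly onto those of `Σ̄^A`.
-/

open Matrix Complex

noncomputable section

/-- The chiral-representation gamma matrices. -/
def γ : Fin 4 → Matrix (Fin 4) (Fin 4) ℂ
  | 0 => !![0, 0, -1, 0; 0, 0, 0, -1; -1, 0, 0, 0; 0, -1, 0, 0]
  | 1 => !![0, 0, 0, 1; 0, 0, 1, 0; 0, -1, 0, 0; -1, 0, 0, 0]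
  | 2 => !![0, 0, 0, -I; 0, 0, I, 0; 0, I, 0, 0; -I, 0, 0, 0]
  | 3 => !![0, 0, 1, 0; 0, 0, 0, -1; -1, 0, 0, 0; 0, 1, 0, 0]

/-- γ⁵ = i γ⁰γ¹γ²γ³. -/
def γ5 : Matrix (Fin 4) (Fin 4) ℂ := I • (γ 0 * γ 1 * γ 2 * γ 3)

/-- The spin operators Σ^A = γ⁵γ⁰γ^A. -/
def SpinOp (A : Fin 4) : Matrix (Fin 4) (Fin 4) ℂ := γ5 * γ 0 * γ A

/-- The Minkowski metric matrix η = diag(1,-1,-1,-1). -/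
def η : Matrix (Fin 4) (Fin 4) ℝ := !![1,0,0,0; 0,-1,0,0; 0,0,-1,0; 0,0,0,-1]

/-- A pair (Λ, L) satisfies the spinor consistency relations:
Λ is a Lorentz transformation, L is invertible,
L⁻¹ γ^A L = Σ_B Λ^A_B γ^B for each A, and γ⁰ L† γ⁰ = L⁻¹. -/
def SpinorConsistent (Λ : Matrix (Fin 4) (Fin 4) ℝ) (L : Matrix (Fin 4) (Fin 4) ℂ) : Prop :=
  Λᵀ * η * Λ = η ∧ IsUnit L.det ∧
  (∀ A : Fin 4, L⁻¹ * γ A * L = ∑ B : Fin 4, (Λ A B : ℂ) • γ B) ∧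
  γ 0 * Lᴴ * γ 0 = L⁻¹

/-- Λ_B{}^C = Σ_{D,E} η_{BD} Λ^D{}_E η^{EC}, lowering the first and raising the second index. -/
def lowerRaise (Λ : Matrix (Fin 4) (Fin 4) ℝ) (B C : Fin 4) : ℝ :=
  ∑ D, ∑ E, η B D * Λ D E * η E C

section Conjugation

variable {n : Type*} [Fintype n] [DecidableEq n] {R : Type*} [CommRing R]
  {L : Matrix n n R}

theorem eq_conj_of_inv_conj_eq (hL : IsUnit L.det) {X Y : Matrix n n R}
    (h : L⁻¹ * X * L = Y) : X = L * Y * L⁻¹ := by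
  rw [← h, Matrix.mul_assoc, Matrix.mul_assoc, mul_nonsing_inv _ hL, Matrix.mul_one,
    ← Matrix.mul_assoc, mul_nonsing_inv _ hL, Matrix.one_mul]

theorem conj_mul_conj (hL : IsUnit L.det) (X Y : Matrix n n R) :
    L * X * L⁻¹ * (L * Y * L⁻¹) = L * (X * Y) * L⁻¹ := by
  simp only [Matrix.mul_assoc, nonsing_inv_mul_cancel_left _ _ hL]

theorem sum_smul_eq_conj {ι : Type*} [Fintype ι] [DecidableEq ι] (hL : IsUnit L.det)
    {γ : ι → Matrix n n R} {K M : Matrix ι ι R} (hKM : Kᵀ * M = 1)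
    (hγ : ∀ A, L⁻¹ * γ A * L = ∑ B, M A B • γ B) (B : ι) :
    ∑ C, K C B • γ C = L * γ B * L⁻¹ := by
  refine eq_conj_of_inv_conj_eq hL ?_
  calc L⁻¹ * (∑ C, K C B • γ C) * L = ∑ C, K C B • ∑ D, M C D • γ D := by
        simp only [Matrix.mul_sum, Matrix.sum_mul, Matrix.mul_smul, Matrix.smul_mul, hγ]
    _ = ∑ D, (Kᵀ * M) B D • γ D := by
        simp only [Matrix.mul_apply, transpose_apply, Finset.smul_sum, smul_smul, Finset.sum_smul]
        exact Finset.sum_comm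
    _ = γ B := by simp [hKM, Matrix.one_apply]

end Conjugation

theorem mulVec_conj_mulVec_eq_iff {n K : Type*} [Fintype n] [DecidableEq n] [Field K]
    {L : Matrix n n K} (hL : IsUnit L.det) (S : Matrix n n K) (v : n → K) :
    (L * S * L⁻¹) *ᵥ (L *ᵥ v) = L *ᵥ v ↔ S *ᵥ v = v := by
  have hinj : Function.Injective L.mulVec :=
    mulVec_injective_iff_isUnit.mpr ((isUnit_iff_isUnit_det L).mpr hL)
  rw [mulVec_mulVec, Matrix.mul_assoc, nonsing_inv_mul _ hL, Matrix.mul_one, ← mulVec_mulVec,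
    hinj.eq_iff]

theorem η_mul_η : η * η = 1 := by
  ext i j
  fin_cases i <;> fin_cases j <;> simp [η, Matrix.mul_apply, Fin.sum_univ_four]

theorem transpose_η : ηᵀ = η := by
  ext i j
  fin_cases i <;> fin_cases j <;> simp [η]

theorem lowerRaise_eq (Λ : Matrix (Fin 4) (Fin 4) ℝ) : of (lowerRaise Λ) = η * Λ * η := by
  ext B C
  simp only [of_apply, lowerRaise, Matrix.mul_apply, Finset.sum_mul]
  exact Finset.sum_comm

theorem transpose_lowerRaise_mul_self {Λ : Matrix (Fin 4) (Fin 4) ℝ} (hΛ : Λᵀ * η * Λ = η) :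
    (of (lowerRaise Λ))ᵀ * Λ = 1 := by
  rw [lowerRaise_eq, transpose_mul, transpose_mul, transpose_η, Matrix.mul_assoc,
    Matrix.mul_assoc, ← Matrix.mul_assoc Λᵀ, hΛ, η_mul_η]

theorem spin_eigenvector_iff_general (Λ : Matrix (Fin 4) (Fin 4) ℝ) (L : Matrix (Fin 4) (Fin 4) ℂ)
    (h : SpinorConsistent Λ L) (Ψ : Fin 4 → ℂ) (A : Fin 4) :
    (SpinOp A).mulVec Ψ = Ψ ↔
      (let γbar : Fin 4 → Matrix (Fin 4) (Fin 4) ℂ :=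
        fun B => ∑ C : Fin 4, (lowerRaise Λ C B : ℂ) • γ C
      let γ5bar : Matrix (Fin 4) (Fin 4) ℂ := L * γ5 * L⁻¹
      let Sbar : Fin 4 → Matrix (Fin 4) (Fin 4) ℂ := fun A => γ5bar * γbar 0 * γbar A
      (Sbar A).mulVec (L.mulVec Ψ) = L.mulVec Ψ) := by
  obtain ⟨hΛ, hL, hγ, -⟩ := h
  have hKM : ((of (lowerRaise Λ)).map ofRealHom)ᵀ * Λ.map ofRealHom = 1 := by
    rw [← transpose_map, ← Matrix.map_mul, transpose_lowerRaise_mul_self hΛ,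
      Matrix.map_one _ (map_zero ofRealHom) (map_one ofRealHom)]
  have hγbar : ∀ B, ∑ C, (lowerRaise Λ C B : ℂ) • γ C = L * γ B * L⁻¹ :=
    sum_smul_eq_conj hL hKM hγ
  simp only [hγbar]
  rw [conj_mul_conj hL, conj_mul_conj hL, ← SpinOp, mulVec_conj_mulVec_eq_iff hL]

/-- With γ̄^B = Σ_C Λ_C{}^B γ^C, γ̄⁵ = L γ⁵ L⁻¹, Σ̄^A = γ̄⁵ γ̄⁰ γ̄^A:
for every Ψ ∈ ℂ⁴ and A ∈ {1,2,3}, Σ^A Ψ = Ψ iff Σ̄^A (LΨ) = LΨ. -/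
theorem spin_eigenvector_iff (Λ : Matrix (Fin 4) (Fin 4) ℝ) (L : Matrix (Fin 4) (Fin 4) ℂ)
    (h : SpinorConsistent Λ L) (Ψ : Fin 4 → ℂ) (A : Fin 4)
    (hA : A ∈ ({1, 2, 3} : Set (Fin 4))) :
    (SpinOp A).mulVec Ψ = Ψ ↔
      (let γbar : Fin 4 → Matrix (Fin 4) (Fin 4) ℂ :=
        fun B => ∑ C : Fin 4, (lowerRaise Λ C B : ℂ) • γ C
      let γ5bar : Matrix (Fin 4) (Fin 4) ℂ := L * γ5 * L⁻¹
      let Sbar : Fin 4 → Matrix (Fin 4) (Fin 4) ℂ := fun A => γ5bar * γbar 0 * γbar A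
      (Sbar A).mulVec (L.mulVec Ψ) = L.mulVec Ψ) :=
  spin_eigenvector_iff_general Λ L h Ψ A
end
end

section
/- For all real 𝔸, 𝔹, the matrix L(𝔸,𝔹) is invertible and the pair (Λ(𝔸,𝔹), L(𝔸,𝔹)) satisfies the spinor consistency relations: L(𝔸,𝔹)⁻¹ γ^A L(𝔸,𝔹) = Σ_B Λ(𝔸,𝔹)^A{}_B γ^B for each A ∈ {0,1,2,3}, and γ⁰ L(𝔸,𝔹)† γ⁰ = L(𝔸,𝔹)⁻¹. -/
open Matrix Complex

noncomputable section

/-- The local Lorentz transformation Λ(𝔸,𝔹), Eq. (FT32). -/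
def Λmat (A B : ℝ) : Matrix (Fin 4) (Fin 4) ℝ :=
  !![1 + (A^2 + B^2)/2, A, B, -((A^2 + B^2)/2);
     A, 1, 0, -A;
     B, 0, 1, -B;
     (A^2 + B^2)/2, A, B, 1 - (A^2 + B^2)/2]

/-- The spinor transformation matrix L(𝔸,𝔹), Eq. (FT33): the identity
except that the (1,2) entry is 𝔸 - i𝔹 and the (4,3) entry is -𝔸 - i𝔹. -/
def Lmat (A B : ℝ) : Matrix (Fin 4) (Fin 4) ℂ :=
  !![1, (A : ℂ) - I * (B : ℂ), 0, 0;
     0, 1, 0, 0;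
     0, 0, 1, 0;
     0, 0, -(A : ℂ) - I * (B : ℂ), 1]

/-! The matrices `Lmat A B` form a group isomorphic to `ℝ²` (they are the spinor images of the null
rotations), so `L(𝔸,𝔹)⁻¹ = L(-𝔸,-𝔹)`. With the inverse explicit, both consistency relations are
identities between explicit `4 × 4` matrices, checked entrywise using `i² = -1`. -/

theorem Lmat_mul_Lmat (A B A' B' : ℝ) : Lmat A B * Lmat A' B' = Lmat (A + A') (B + B') := by
  ext i j
  fin_cases i <;> fin_cases j <;> simp [Lmat, mul_apply, Fin.sum_univ_four] <;> ring

theorem Lmat_zero_zero : Lmat 0 0 = 1 := by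
  ext i j
  fin_cases i <;> fin_cases j <;> simp [Lmat, one_apply]

theorem Lmat_neg_mul_Lmat (A B : ℝ) : Lmat (-A) (-B) * Lmat A B = 1 := by
  rw [Lmat_mul_Lmat, neg_add_cancel, neg_add_cancel, Lmat_zero_zero]

theorem isUnit_det_Lmat (A B : ℝ) : IsUnit (Lmat A B).det :=
  isUnit_det_of_left_inverse (Lmat_neg_mul_Lmat A B)

theorem inv_Lmat (A B : ℝ) : (Lmat A B)⁻¹ = Lmat (-A) (-B) :=
  inv_eq_left_inv (Lmat_neg_mul_Lmat A B)

theorem conjTranspose_Lmat (A B : ℝ) : (Lmat A B)ᴴ =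
    !![1, 0, 0, 0;
       (A : ℂ) + I * (B : ℂ), 1, 0, 0;
       0, 0, 1, -(A : ℂ) + I * (B : ℂ);
       0, 0, 0, 1] := by
  ext i j
  fin_cases i <;> fin_cases j <;> simp [Lmat, conjTranspose_apply]

theorem γ_zero_mul_conjTranspose_Lmat_mul_γ_zero (A B : ℝ) :
    γ 0 * (Lmat A B)ᴴ * γ 0 = Lmat (-A) (-B) := by
  rw [conjTranspose_Lmat]
  ext i j
  fin_cases i <;> fin_cases j <;> simp [γ, Lmat, mul_apply, Fin.sum_univ_four]

set_option maxHeartbeats 400000 in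
theorem Lmat_neg_mul_γ_mul_Lmat (A B : ℝ) (C : Fin 4) :
    Lmat (-A) (-B) * γ C * Lmat A B = ∑ D : Fin 4, ((Λmat A B C D : ℝ) : ℂ) • γ D := by
  fin_cases C <;> ext i j <;> fin_cases i <;> fin_cases j <;>
    simp [γ, Lmat, Λmat, mul_apply, Fin.sum_univ_four] <;> grind [I_sq]

/-- L(𝔸,𝔹) is invertible and (Λ(𝔸,𝔹), L(𝔸,𝔹)) satisfies the spinor consistency
relations L⁻¹ γ^A L = Σ_B Λ^A_B γ^B and γ⁰ L† γ⁰ = L⁻¹. -/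
theorem Lmat_consistency (A B : ℝ) :
    IsUnit (Lmat A B).det ∧
    (∀ C : Fin 4, (Lmat A B)⁻¹ * γ C * Lmat A B =
      ∑ D : Fin 4, ((Λmat A B C D : ℝ) : ℂ) • γ D) ∧
    γ 0 * (Lmat A B)ᴴ * γ 0 = (Lmat A B)⁻¹ := by
  rw [inv_Lmat]
  exact ⟨isUnit_det_Lmat A B, Lmat_neg_mul_γ_mul_Lmat A B,
    γ_zero_mul_conjTranspose_Lmat_mul_γ_zero A B⟩
end
end

section
/- Let I ⊆ ℝ be an open interval, let f, g : I → ℝ be differentiable with f(w) ≠ 0 and g(w) ≠ 0 for all w ∈ I, let m, p_x, p_y, p_v be real with p_v ≠ 0, and set μ = ½( f′/f + g′/g ). Suppose differentiable functions 𝔽₁, 𝔽₂, 𝔾₁, 𝔾₂ : I → ℂ satisfy on I the system: (i) (i p_x/f + p_y/g) 𝔾₂ + √2 μ 𝔾₁ + √2 𝔾₁′ = i m 𝔽₁; (ii) (i p_x/f − p_y/g) 𝔾₁ − i√2 p_v 𝔾₂ = i m 𝔽₂; (iii) −(i p_x/f + p_y/g) 𝔽₂ − i√2 p_v 𝔽₁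 = i m 𝔾₁; (iv) (−i p_x/f + p_y/g) 𝔽₁ + √2 μ 𝔽₂ + √2 𝔽₂′ = i m 𝔾₂. Then 𝔾₁ and 𝔽₂ each satisfy the same decoupled first-order equation: [ i( m² f² g² + p_x² g² + p_y² f² ) + p_v f g ( g f′ + f g′ ) ] 𝔾₁ + 2 p_v f² g² 𝔾₁′ = 0, and [ i( m² f² g² + p_x² g² + p_y² f² ) + p_v f g ( g f′ + f g′ ) ] 𝔽₂ + 2 p_v f² g² 𝔽₂′ = 0. -/
open Complex

/-! Write `P = i pₓ/f`, `Q = p_y/g`. Multiplying (i) by `√2 p_v` and eliminating `𝔾₂` with (ii) and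
`𝔽₁` with (iii) leaves `(i(m² + Q² − P²) + 2 p_v μ) 𝔾₁ + 2 p_v 𝔾₁′ = 0`; clearing the denominators
`f² g²` gives the first equation. The system is invariant under
`(𝔾₁, 𝔾₂, 𝔽₁, 𝔽₂, pₓ) ↦ (𝔽₂, 𝔽₁, 𝔾₂, 𝔾₁, −pₓ)`, which exchanges (i) with (iv) and (ii) with (iii),
so the same elimination gives the equation for `𝔽₂`. -/

theorem decoupled_of_dirac_triple {R : Type*} [CommRing R] {i s P Q μ m pv A B C D dA : R}
    (hi : i ^ 2 = -1) (hs : s ^ 2 = 2)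
    (e1 : (P + Q) * B + s * μ * A + s * dA = i * m * C)
    (e2 : (P - Q) * A - i * (s * pv) * B = i * m * D)
    (e3 : -((P + Q) * D) - i * (s * pv) * C = i * m * A) :
    (i * (m ^ 2 + Q ^ 2 - P ^ 2) + 2 * pv * μ) * A + 2 * pv * dA = 0 := by
  linear_combination s * pv * e1 - m * e3 - i * (P + Q) * e2
    - (pv * μ * A + pv * dA) * hs - (P + Q) * (s * pv * B + m * D) * hi

theorem decoupled_mul_sq_of_decoupled {K : Type*} [Field K] {i fv gv df dg μ m px py pv A dA : K}
    (hi : i ^ 2 = -1) (hf : fv ≠ 0) (hg : gv ≠ 0) (hμ : 2 * μ = df / fv + dg / gv)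
    (h : (i * (m ^ 2 + (py / gv) ^ 2 - (i * px / fv) ^ 2) + 2 * pv * μ) * A + 2 * pv * dA = 0) :
    (i * (m ^ 2 * fv ^ 2 * gv ^ 2 + px ^ 2 * gv ^ 2 + py ^ 2 * fv ^ 2)
      + pv * fv * gv * (gv * df + fv * dg)) * A + 2 * pv * fv ^ 2 * gv ^ 2 * dA = 0 := by
  field_simp at hμ h
  linear_combination h - fv * gv * pv * A * hμ + i * gv ^ 2 * px ^ 2 * A * hi

theorem decoupling_of_dirac_system_general
    (U : Set ℝ)
    (f g : ℝ → ℝ)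
    (hf0 : ∀ u ∈ U, f u ≠ 0) (hg0 : ∀ u ∈ U, g u ≠ 0)
    (m px py pv : ℝ)
    (μ : ℝ → ℝ) (hμ : ∀ u, μ u = (deriv f u / f u + deriv g u / g u) / 2)
    (F₁ F₂ G₁ G₂ : ℝ → ℂ)
    (h1 : ∀ u ∈ U,
      (I * (px : ℂ) / (f u : ℂ) + (py : ℂ) / (g u : ℂ)) * G₂ u
        + ((Real.sqrt 2 * μ u : ℝ) : ℂ) * G₁ u
        + ((Real.sqrt 2 : ℝ) : ℂ) * deriv G₁ u = I * (m : ℂ) * F₁ u)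
    (h2 : ∀ u ∈ U,
      (I * (px : ℂ) / (f u : ℂ) - (py : ℂ) / (g u : ℂ)) * G₁ u
        - I * ((Real.sqrt 2 * pv : ℝ) : ℂ) * G₂ u = I * (m : ℂ) * F₂ u)
    (h3 : ∀ u ∈ U,
      -((I * (px : ℂ) / (f u : ℂ) + (py : ℂ) / (g u : ℂ)) * F₂ u)
        - I * ((Real.sqrt 2 * pv : ℝ) : ℂ) * F₁ u = I * (m : ℂ) * G₁ u)
    (h4 : ∀ u ∈ U,
      (-(I * (px : ℂ)) / (f u : ℂ) + (py : ℂ) / (g u : ℂ)) * F₁ u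
        + ((Real.sqrt 2 * μ u : ℝ) : ℂ) * F₂ u
        + ((Real.sqrt 2 : ℝ) : ℂ) * deriv F₂ u = I * (m : ℂ) * G₂ u) :
    (∀ u ∈ U,
      (I * ((m ^ 2 * (f u) ^ 2 * (g u) ^ 2 + px ^ 2 * (g u) ^ 2 + py ^ 2 * (f u) ^ 2 : ℝ) : ℂ)
          + ((pv * f u * g u * (g u * deriv f u + f u * deriv g u) : ℝ) : ℂ)) * G₁ u
        + ((2 * pv * (f u) ^ 2 * (g u) ^ 2 : ℝ) : ℂ) * deriv G₁ u = 0) ∧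
    (∀ u ∈ U,
      (I * ((m ^ 2 * (f u) ^ 2 * (g u) ^ 2 + px ^ 2 * (g u) ^ 2 + py ^ 2 * (f u) ^ 2 : ℝ) : ℂ)
          + ((pv * f u * g u * (g u * deriv f u + f u * deriv g u) : ℝ) : ℂ)) * F₂ u
        + ((2 * pv * (f u) ^ 2 * (g u) ^ 2 : ℝ) : ℂ) * deriv F₂ u = 0) := by
  have hs : ((Real.sqrt 2 : ℝ) : ℂ) ^ 2 = 2 := by
    rw [← ofReal_pow, Real.sq_sqrt zero_le_two, ofReal_ofNat]
  have hμc (u : ℝ) : 2 * (μ u : ℂ) = ((deriv f u : ℝ) : ℂ) / f u + ((deriv g u : ℝ) : ℂ) / g u := by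
    rw [hμ]; push_cast; ring
  push_cast at h1 h2 h3 h4
  refine ⟨fun u hu => ?_, fun u hu => ?_⟩ <;> push_cast <;>
    refine decoupled_mul_sq_of_decoupled I_sq (ofReal_ne_zero.2 (hf0 u hu))
      (ofReal_ne_zero.2 (hg0 u hu)) (hμc u) ?_
  · exact decoupled_of_dirac_triple I_sq hs (h1 u hu) (h2 u hu) (h3 u hu)
  · rw [← neg_sq (I * px / f u)]
    refine decoupled_of_dirac_triple I_sq hs (B := F₁ u) (C := G₂ u) (D := G₁ u) ?_ ?_ ?_
    · linear_combination h4 u hu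
    · linear_combination h3 u hu
    · linear_combination h2 u hu

/-- The Newman–Penrose Dirac system (i)–(iv) for the spinor component profiles
(𝔽₁,𝔽₂,𝔾₁,𝔾₂) implies that 𝔾₁ and 𝔽₂ each satisfy the same decoupled
first-order equation. Here μ = ½(f′/f + g′/g). -/
theorem decoupling_of_dirac_system
    (U : Set ℝ) (hUopen : IsOpen U) (hUconn : U.OrdConnected)
    (f g : ℝ → ℝ)
    (hf : ∀ u ∈ U, DifferentiableAt ℝ f u) (hg : ∀ u ∈ U, DifferentiableAt ℝ g u)
    (hf0 : ∀ u ∈ U, f u ≠ 0) (hg0 : ∀ u ∈ U, g u ≠ 0)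
    (m px py pv : ℝ) (hpv : pv ≠ 0)
    (μ : ℝ → ℝ) (hμ : ∀ u, μ u = (deriv f u / f u + deriv g u / g u) / 2)
    (F₁ F₂ G₁ G₂ : ℝ → ℂ)
    (hF₁ : ∀ u ∈ U, DifferentiableAt ℝ F₁ u) (hF₂ : ∀ u ∈ U, DifferentiableAt ℝ F₂ u)
    (hG₁ : ∀ u ∈ U, DifferentiableAt ℝ G₁ u) (hG₂ : ∀ u ∈ U, DifferentiableAt ℝ G₂ u)
    (h1 : ∀ u ∈ U,
      (I * (px : ℂ) / (f u : ℂ) + (py : ℂ) / (g u : ℂ)) * G₂ u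
        + ((Real.sqrt 2 * μ u : ℝ) : ℂ) * G₁ u
        + ((Real.sqrt 2 : ℝ) : ℂ) * deriv G₁ u = I * (m : ℂ) * F₁ u)
    (h2 : ∀ u ∈ U,
      (I * (px : ℂ) / (f u : ℂ) - (py : ℂ) / (g u : ℂ)) * G₁ u
        - I * ((Real.sqrt 2 * pv : ℝ) : ℂ) * G₂ u = I * (m : ℂ) * F₂ u)
    (h3 : ∀ u ∈ U,
      -((I * (px : ℂ) / (f u : ℂ) + (py : ℂ) / (g u : ℂ)) * F₂ u)
        - I * ((Real.sqrt 2 * pv : ℝ) : ℂ) * F₁ u = I * (m : ℂ) * G₁ u)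
    (h4 : ∀ u ∈ U,
      (-(I * (px : ℂ)) / (f u : ℂ) + (py : ℂ) / (g u : ℂ)) * F₁ u
        + ((Real.sqrt 2 * μ u : ℝ) : ℂ) * F₂ u
        + ((Real.sqrt 2 : ℝ) : ℂ) * deriv F₂ u = I * (m : ℂ) * G₂ u) :
    (∀ u ∈ U,
      (I * ((m ^ 2 * (f u) ^ 2 * (g u) ^ 2 + px ^ 2 * (g u) ^ 2 + py ^ 2 * (f u) ^ 2 : ℝ) : ℂ)
          + ((pv * f u * g u * (g u * deriv f u + f u * deriv g u) : ℝ) : ℂ)) * G₁ u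
        + ((2 * pv * (f u) ^ 2 * (g u) ^ 2 : ℝ) : ℂ) * deriv G₁ u = 0) ∧
    (∀ u ∈ U,
      (I * ((m ^ 2 * (f u) ^ 2 * (g u) ^ 2 + px ^ 2 * (g u) ^ 2 + py ^ 2 * (f u) ^ 2 : ℝ) : ℂ)
          + ((pv * f u * g u * (g u * deriv f u + f u * deriv g u) : ℝ) : ℂ)) * F₂ u
        + ((2 * pv * (f u) ^ 2 * (g u) ^ 2 : ℝ) : ℂ) * deriv F₂ u = 0) :=
  decoupling_of_dirac_system_general U f g hf0 hg0 m px py pv μ hμ F₁ F₂ G₁ G₂ h1 h2 h3 h4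
end

section
/- Let k, p_v, m, p_x, p_y be real with k ≠ 0 and p_v ≠ 0, and let u be real with k·w ∈ (−π/2, π/2) for all w between 0 and u. With f(w) = cos(kw) and g(w) = cosh(kw), one has the closed-form evaluation ∫₀^u [ −i( p_x² g(w)² + p_y² f(w)² + m² f(w)² g(w)² ) − p_v f(w) g(w) ( f(w) g′(w) + g(w) f′(w) ) ] / ( 2 p_v f(w)² g(w)² ) dw = −i ( m² k u + p_x² tan(ku) + p_y² tanh(ku) ) / ( 2 k p_v ) − ½ ln( cos(ku) cosh(ku) ). -/
open Real

/-!
The integrand splits as `-i` times the derivative of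
`(m²kw + p_x² tan(kw) + p_y² tanh(kw)) / (2kp_v)`, because `tan' = 1/cos²` and
`tanh' = 1/cosh²`, minus the logarithmic derivative `(fg)'/(2fg)` of `½ log(fg)`. Both
antiderivatives vanish at `w = 0`, and on the range `cos(kw) > 0` keeps the denominator nonzero
and the logarithm smooth, so the fundamental theorem of calculus gives the closed form.
-/

noncomputable section

theorem Real.hasDerivAt_tanh (x : ℝ) : HasDerivAt tanh (1 / cosh x ^ 2) x := by
  have h := (hasDerivAt_sinh x).div (hasDerivAt_cosh x) (cosh_pos x).ne'
  rw [show sinh / cosh = tanh from funext fun y => (tanh_eq_sinh_div_cosh y).symm] at h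
  refine h.congr_deriv ?_
  rw [← cosh_sq_sub_sinh_sq x]
  ring

section ConstMul

variable {k x : ℝ}

theorem hasDerivAt_cos_const_mul : HasDerivAt (fun y => cos (k * y)) (-(k * sin (k * x))) x := by
  simpa [mul_comm] using (hasDerivAt_const_mul (x := x) k).cos

theorem hasDerivAt_cosh_const_mul : HasDerivAt (fun y => cosh (k * y)) (k * sinh (k * x)) x := by
  simpa [mul_comm] using (hasDerivAt_const_mul (x := x) k).cosh

theorem hasDerivAt_tan_const_mul (h : cos (k * x) ≠ 0) :
    HasDerivAt (fun y => tan (k * y)) (k / cos (k * x) ^ 2) x := by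
  simpa [div_eq_inv_mul, mul_comm, Function.comp_def] using
    (hasDerivAt_tan h).comp x (hasDerivAt_const_mul (x := x) k)

theorem hasDerivAt_tanh_const_mul :
    HasDerivAt (fun y => tanh (k * y)) (k / cosh (k * x) ^ 2) x := by
  simpa [div_eq_inv_mul, mul_comm, Function.comp_def] using
    (Real.hasDerivAt_tanh (k * x)).comp x (hasDerivAt_const_mul (x := x) k)

end ConstMul

-- The factor `pv`, which cancels, puts the derivative in the shape of the integrand's amplitude term.
theorem hasDerivAt_half_log_mul {f g : ℝ → ℝ} {f' g' w : ℝ} (pv : ℝ) (hpv : pv ≠ 0)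
    (hf : HasDerivAt f f' w) (hg : HasDerivAt g g' w) (hf0 : f w ≠ 0) (hg0 : g w ≠ 0) :
    HasDerivAt (fun x => log (f x * g x) / 2)
      (pv * f w * g w * (f w * g' + g w * f') / (2 * pv * f w ^ 2 * g w ^ 2)) w := by
  refine (((hf.mul hg).log (mul_ne_zero hf0 hg0)).div_const 2).congr_deriv ?_
  rw [Pi.mul_apply]
  field_simp
  ring

theorem hasDerivAt_pulse_phase {k pv w : ℝ} (m px py : ℝ) (hk : k ≠ 0) (hpv : pv ≠ 0)
    (hc : cos (k * w) ≠ 0) :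
    HasDerivAt
      (fun x => (m ^ 2 * k * x + px ^ 2 * tan (k * x) + py ^ 2 * tanh (k * x)) / (2 * k * pv))
      ((px ^ 2 * cosh (k * w) ^ 2 + py ^ 2 * cos (k * w) ^ 2
          + m ^ 2 * cos (k * w) ^ 2 * cosh (k * w) ^ 2)
        / (2 * pv * cos (k * w) ^ 2 * cosh (k * w) ^ 2)) w := by
  refine ((((hasDerivAt_const_mul (x := w) (m ^ 2 * k)).add
    ((hasDerivAt_tan_const_mul hc).const_mul (px ^ 2))).add
    (hasDerivAt_tanh_const_mul.const_mul (py ^ 2))).div_const (2 * k * pv)).congr_deriv ?_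
  have hch : cosh (k * w) ≠ 0 := (cosh_pos _).ne'
  field_simp
  ring

open Complex intervalIntegral

theorem integral_neg_I_mul_sub_div_eq {φ ψ a b d : ℝ → ℝ} {s t : ℝ}
    (hφ : ∀ w ∈ Set.uIcc s t, HasDerivAt φ (a w / d w) w)
    (hψ : ∀ w ∈ Set.uIcc s t, HasDerivAt ψ (b w / d w) w)
    (ha : ContinuousOn a (Set.uIcc s t)) (hb : ContinuousOn b (Set.uIcc s t))
    (hd : ContinuousOn d (Set.uIcc s t)) (hd0 : ∀ w ∈ Set.uIcc s t, d w ≠ 0) :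
    ∫ w in s..t, (-(I * (a w : ℂ)) - (b w : ℂ)) / (d w : ℂ)
      = -I * ((φ t - φ s : ℝ) : ℂ) - ((ψ t - ψ s : ℝ) : ℂ) := by
  have hderiv : ∀ w ∈ Set.uIcc s t, HasDerivAt (fun x => -I * (φ x : ℂ) - (ψ x : ℂ))
      ((-(I * (a w : ℂ)) - (b w : ℂ)) / (d w : ℂ)) w := fun w hw =>
    (((hφ w hw).ofReal_comp.const_mul (-I)).sub (hψ w hw).ofReal_comp).congr_deriv (by
      have := ofReal_ne_zero.2 (hd0 w hw)
      push_cast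
      field_simp)
  have hcont : ContinuousOn (fun w => (-(I * (a w : ℂ)) - (b w : ℂ)) / (d w : ℂ))
      (Set.uIcc s t) :=
    ContinuousOn.div (by fun_prop) (by fun_prop) fun w hw => ofReal_ne_zero.2 (hd0 w hw)
  rw [integral_eq_sub_of_hasDerivAt hderiv hcont.intervalIntegrable]
  push_cast
  ring

/-- Closed-form evaluation of the phase integral Φ_W(0,u) inside the wave
pulse region W, where f(w) = cos(kw) and g(w) = cosh(kw):
∫₀ᵘ φ(w) dw = −i(m²ku + p_x² tan(ku) + p_y² tanh(ku))/(2kp_v) − ½ ln(cos(ku)cosh(ku)). -/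
theorem phase_integral_region_W
    (k pv m px py : ℝ) (hk : k ≠ 0) (hpv : pv ≠ 0) (u : ℝ)
    (hrange : ∀ w ∈ Set.uIcc (0 : ℝ) u, k * w ∈ Set.Ioo (-(π / 2)) (π / 2))
    (f g : ℝ → ℝ)
    (hf : ∀ w, f w = Real.cos (k * w)) (hg : ∀ w, g w = Real.cosh (k * w)) :
    (∫ w in (0 : ℝ)..u,
        ((-(I * ((px ^ 2 * (g w) ^ 2 + py ^ 2 * (f w) ^ 2
              + m ^ 2 * (f w) ^ 2 * (g w) ^ 2 : ℝ) : ℂ))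
          - ((pv * f w * g w * (f w * deriv g w + g w * deriv f w) : ℝ) : ℂ))
        / ((2 * pv * (f w) ^ 2 * (g w) ^ 2 : ℝ) : ℂ)))
      = -I * (((m ^ 2 * k * u + px ^ 2 * Real.tan (k * u) + py ^ 2 * Real.tanh (k * u))
            / (2 * k * pv) : ℝ) : ℂ)
        - ((Real.log (Real.cos (k * u) * Real.cosh (k * u)) / 2 : ℝ) : ℂ) := by
  obtain rfl : f = fun w => Real.cos (k * w) := funext hf
  obtain rfl : g = fun w => Real.cosh (k * w) := funext hg
  have hcos : ∀ w ∈ Set.uIcc 0 u, Real.cos (k * w) ≠ 0 := fun w hw =>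
    (cos_pos_of_mem_Ioo (hrange w hw)).ne'
  have hdf : ∀ w, deriv (fun x => Real.cos (k * x)) w = -(k * Real.sin (k * w)) := fun _ =>
    hasDerivAt_cos_const_mul.deriv
  have hdg : ∀ w, deriv (fun x => Real.cosh (k * x)) w = k * Real.sinh (k * w) := fun _ =>
    hasDerivAt_cosh_const_mul.deriv
  simp only [hdf, hdg]
  rw [integral_neg_I_mul_sub_div_eq
    (fun w hw => hasDerivAt_pulse_phase m px py hk hpv (hcos w hw))
    (fun w hw => hasDerivAt_half_log_mul pv hpv hasDerivAt_cos_const_mul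
      hasDerivAt_cosh_const_mul (hcos w hw) (cosh_pos _).ne')
    (by fun_prop) (by fun_prop) (by fun_prop)
    (fun w hw => by have := hcos w hw; have := (cosh_pos (k * w)).ne'; positivity)]
  simp
end
end

section
/- Let p, q, r, s, a, p_v, m, p_x, p_y be real with p_v ≠ 0, set f(w) = p + qw and g(w) = r + sw, and let u ≥ a be such that f(w) > 0 and g(w) > 0 for all w ∈ [a, u]. Then ∫_a^u [ −i( p_x² g(w)² + p_y² f(w)² + m² f(w)² g(w)² ) − p_v f(w) g(w) ( f(w) g′(w) + g(w) f′(w) ) ] / ( 2 p_v f(w)² g(w)² ) dw = ( i (a − u) / (2 p_v) ) ( m² + p_x² / ( f(a) f(u) ) + p_y² / ( g(a) g(u) ) ) − ½ ln( f(u) g(u) / ( f(a) g(a) ) ). -/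
open Complex intervalIntegral

noncomputable section

/-! The integrand is `i` times a rational function plus `-(f'/f + g'/g)/2`. For affine `f`, `g`
the rational part `-(m² + p_x²/f² + p_y²/g²)/(2p_v)` has an explicit primitive, the second part is a
logarithmic derivative, and the fundamental theorem of calculus gives the closed form. -/

section Affine

variable {f : ℝ → ℝ} {p q : ℝ}

theorem hasDerivAt_of_forall_eq_affine (hf : ∀ w, f w = p + q * w) (w : ℝ) :
    HasDerivAt f q w := by
  rw [funext hf]
  simpa using ((hasDerivAt_id w).const_mul q).const_add p

theorem continuous_of_forall_eq_affine (hf : ∀ w, f w = p + q * w) : Continuous f := by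
  rw [funext hf]
  fun_prop

theorem deriv_eq_of_forall_eq_affine (hf : ∀ w, f w = p + q * w) : deriv f = fun _ => q :=
  funext fun w => (hasDerivAt_of_forall_eq_affine hf w).deriv

/- `(w - a) / (f a * f w)` is the primitive of `1 / f ^ 2` vanishing at `a`; unlike `-1 / (q * f)`
it stays valid when `q = 0`. -/
theorem hasDerivAt_sub_div_mul_of_forall_eq_affine (hf : ∀ w, f w = p + q * w) {a w : ℝ}
    (ha : f a ≠ 0) (hw : f w ≠ 0) :
    HasDerivAt (fun x => (x - a) / (f a * f x)) (1 / f w ^ 2) w := by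
  refine (((hasDerivAt_id w).sub_const a).div
    ((hasDerivAt_of_forall_eq_affine hf w).const_mul (f a)) (mul_ne_zero ha hw)).congr_deriv ?_
  simp only [id]
  field_simp
  rw [hf a, hf w]
  ring

end Affine

theorem phase_integrand_eq {pv m px py F G F' G' : ℝ} (hpv : pv ≠ 0) (hF : F ≠ 0) (hG : G ≠ 0) :
    ((-(I * ((px ^ 2 * G ^ 2 + py ^ 2 * F ^ 2 + m ^ 2 * F ^ 2 * G ^ 2 : ℝ) : ℂ))
        - ((pv * F * G * (F * G' + G * F') : ℝ) : ℂ)) / ((2 * pv * F ^ 2 * G ^ 2 : ℝ) : ℂ))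
      = I * ((-(m ^ 2 + px ^ 2 * (1 / F ^ 2) + py ^ 2 * (1 / G ^ 2)) / (2 * pv) : ℝ) : ℂ)
        - ((F' / F + G' / G) / 2 : ℝ) := by
  have hpv' : (pv : ℂ) ≠ 0 := ofReal_ne_zero.mpr hpv
  have hF' : (F : ℂ) ≠ 0 := ofReal_ne_zero.mpr hF
  have hG' : (G : ℂ) ≠ 0 := ofReal_ne_zero.mpr hG
  push_cast
  field_simp
  ring

def phasePrimitive (a pv m px py : ℝ) (f g : ℝ → ℝ) (w : ℝ) : ℂ :=
  I * ((-(m ^ 2 * (w - a) + px ^ 2 * ((w - a) / (f a * f w))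
      + py ^ 2 * ((w - a) / (g a * g w))) / (2 * pv) : ℝ) : ℂ)
    - ((Real.log (f w) + Real.log (g w)) / 2 : ℝ)

theorem hasDerivAt_phasePrimitive {p q r s a pv m px py w : ℝ} {f g : ℝ → ℝ} (hpv : pv ≠ 0)
    (hf : ∀ w, f w = p + q * w) (hg : ∀ w, g w = r + s * w)
    (hfa : f a ≠ 0) (hga : g a ≠ 0) (hfw : f w ≠ 0) (hgw : g w ≠ 0) :
    HasDerivAt (phasePrimitive a pv m px py f g)
      ((-(I * ((px ^ 2 * (g w) ^ 2 + py ^ 2 * (f w) ^ 2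
              + m ^ 2 * (f w) ^ 2 * (g w) ^ 2 : ℝ) : ℂ))
          - ((pv * f w * g w * (f w * deriv g w + g w * deriv f w) : ℝ) : ℂ))
        / ((2 * pv * (f w) ^ 2 * (g w) ^ 2 : ℝ) : ℂ)) w := by
  have hf' := hasDerivAt_of_forall_eq_affine hf w
  have hg' := hasDerivAt_of_forall_eq_affine hg w
  have hre := (((((hasDerivAt_id w).sub_const a).const_mul (m ^ 2)).add
    ((hasDerivAt_sub_div_mul_of_forall_eq_affine hf hfa hfw).const_mul (px ^ 2))).add
    ((hasDerivAt_sub_div_mul_of_forall_eq_affine hg hga hgw).const_mul (py ^ 2))).neg.div_const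
    (2 * pv)
  have hlog := ((hf'.log hfw).add (hg'.log hgw)).div_const 2
  rw [hf'.deriv, hg'.deriv, phase_integrand_eq hpv hfw hgw]
  refine ((hre.ofReal_comp.const_mul I).sub hlog.ofReal_comp).congr_deriv ?_
  push_cast
  ring

theorem phasePrimitive_sub {a u pv m px py : ℝ} {f g : ℝ → ℝ} (hfa : f a ≠ 0) (hga : g a ≠ 0)
    (hfu : f u ≠ 0) (hgu : g u ≠ 0) :
    phasePrimitive a pv m px py f g u - phasePrimitive a pv m px py f g a
      = (I * (((a - u) / (2 * pv) : ℝ) : ℂ))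
          * (((m ^ 2 + px ^ 2 / (f a * f u) + py ^ 2 / (g a * g u) : ℝ)) : ℂ)
        - ((Real.log (f u * g u / (f a * g a)) / 2 : ℝ) : ℂ) := by
  rw [Real.log_div (mul_ne_zero hfu hgu) (mul_ne_zero hfa hga), Real.log_mul hfu hgu,
    Real.log_mul hfa hga]
  simp only [phasePrimitive, sub_self, zero_div, mul_zero, add_zero]
  push_cast
  ring

/-- Closed-form evaluation of the phase integral Φ_B(a,u) in the post-wave
region B, where f(w) = p + qw and g(w) = r + sw are affine:
∫ₐᵘ φ(w) dw = (i(a−u)/(2p_v))(m² + p_x²/(f(a)f(u)) + p_y²/(g(a)g(u)))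
              − ½ ln(f(u)g(u)/(f(a)g(a))). -/
theorem phase_integral_region_B
    (p q r s a pv m px py : ℝ) (hpv : pv ≠ 0)
    (f g : ℝ → ℝ)
    (hf : ∀ w, f w = p + q * w) (hg : ∀ w, g w = r + s * w)
    (u : ℝ) (hau : a ≤ u)
    (hfpos : ∀ w ∈ Set.Icc a u, 0 < f w) (hgpos : ∀ w ∈ Set.Icc a u, 0 < g w) :
    (∫ w in a..u,
        ((-(I * ((px ^ 2 * (g w) ^ 2 + py ^ 2 * (f w) ^ 2
              + m ^ 2 * (f w) ^ 2 * (g w) ^ 2 : ℝ) : ℂ))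
          - ((pv * f w * g w * (f w * deriv g w + g w * deriv f w) : ℝ) : ℂ))
        / ((2 * pv * (f w) ^ 2 * (g w) ^ 2 : ℝ) : ℂ)))
      = (I * (((a - u) / (2 * pv) : ℝ) : ℂ))
          * (((m ^ 2 + px ^ 2 / (f a * f u) + py ^ 2 / (g a * g u) : ℝ)) : ℂ)
        - ((Real.log (f u * g u / (f a * g a)) / 2 : ℝ) : ℂ) := by
  rw [← Set.uIcc_of_le hau] at hfpos hgpos
  have hf0 : ∀ w ∈ Set.uIcc a u, f w ≠ 0 := fun w hw => (hfpos w hw).ne'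
  have hg0 : ∀ w ∈ Set.uIcc a u, g w ≠ 0 := fun w hw => (hgpos w hw).ne'
  have ha : a ∈ Set.uIcc a u := Set.left_mem_uIcc
  have hu : u ∈ Set.uIcc a u := Set.right_mem_uIcc
  rw [← phasePrimitive_sub (hf0 a ha) (hg0 a ha) (hf0 u hu) (hg0 u hu)]
  refine integral_eq_sub_of_hasDerivAt (fun w hw => hasDerivAt_phasePrimitive hpv hf hg
    (hf0 a ha) (hg0 a ha) (hf0 w hw) (hg0 w hw)) (ContinuousOn.intervalIntegrable ?_)
  have := continuous_of_forall_eq_affine hf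
  have := continuous_of_forall_eq_affine hg
  rw [deriv_eq_of_forall_eq_affine hf, deriv_eq_of_forall_eq_affine hg]
  refine ContinuousOn.div (by fun_prop) (by fun_prop) fun w hw => ?_
  simp [hpv, hf0 w hw, hg0 w hw]
end
end

section
/- For real 𝔸, 𝔹, let Ψ^(x)(𝔸,𝔹) = (1+𝔸−i𝔹, 1, −1, −1+𝔸+i𝔹)ᵀ ∈ ℂ⁴. Then Σ¹ Ψ^(x)(𝔸,𝔹) − Ψ^(x)(𝔸,𝔹) = (−𝔸+i𝔹, 𝔸−i𝔹, 𝔸+i𝔹, −𝔸−i𝔹)ᵀ, and this difference is zero if and only if 𝔸 = 0 and 𝔹 = 0. In particular, whenever (𝔸,𝔹) ≠ (0,0), the initially x-polarized laboratory spinor is no longer an eigenvector of Σ¹ with eigenvalue 1 after the passage of the gravitational wave pulse. -/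
open Matrix Complex

/-! In the chiral representation γ⁵ = diag(1, 1, -1, -1), so Σ¹ = σ¹ ⊕ σ¹ swaps the two
components of each Weyl spinor. Hence the second entry of Σ¹Ψ − Ψ is 𝔸 − i𝔹, which vanishes
only when 𝔸 = 𝔹 = 0. -/

noncomputable section

lemma γ5_eq_diagonal : γ5 = diagonal ![1, 1, -1, -1] := by
  ext i j
  fin_cases i <;> fin_cases j <;> simp [γ5, γ]

lemma spinOp_one_mulVec (v : Fin 4 → ℂ) : SpinOp 1 *ᵥ v = ![v 1, v 0, v 3, v 2] := by
  ext i
  fin_cases i <;>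
    simp [SpinOp, γ5_eq_diagonal, γ, mulVec, dotProduct, mul_apply, Fin.sum_univ_four]

lemma ofReal_sub_I_mul_ofReal_eq_zero_iff {a b : ℝ} : (a : ℂ) - I * b = 0 ↔ a = 0 ∧ b = 0 := by
  simp [Complex.ext_iff]

/-- For the initially x-polarized laboratory spinor Ψ^(x)(𝔸,𝔹) in the post-wave
region: Σ¹Ψ − Ψ = (−𝔸+i𝔹, 𝔸−i𝔹, 𝔸+i𝔹, −𝔸−i𝔹)ᵀ, this difference vanishes iff
𝔸 = 0 and 𝔹 = 0; in particular for (𝔸,𝔹) ≠ (0,0) the spinor is no longer an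
eigenvector of Σ¹ with eigenvalue 1. -/
theorem x_polarization_destroyed (A B : ℝ) :
    (let Ψx : Fin 4 → ℂ := ![1 + (A : ℂ) - I * (B : ℂ), 1, -1, -1 + (A : ℂ) + I * (B : ℂ)]
    ((SpinOp 1).mulVec Ψx - Ψx =
        ![-(A : ℂ) + I * (B : ℂ), (A : ℂ) - I * (B : ℂ),
          (A : ℂ) + I * (B : ℂ), -(A : ℂ) - I * (B : ℂ)]) ∧
      ((SpinOp 1).mulVec Ψx - Ψx = 0 ↔ A = 0 ∧ B = 0) ∧
      ((A, B) ≠ ((0 : ℝ), (0 : ℝ)) → (SpinOp 1).mulVec Ψx ≠ Ψx)) := by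
  intro Ψx
  have hdiff : SpinOp 1 *ᵥ Ψx - Ψx =
      ![-(A : ℂ) + I * (B : ℂ), (A : ℂ) - I * (B : ℂ),
        (A : ℂ) + I * (B : ℂ), -(A : ℂ) - I * (B : ℂ)] := by
    ext i
    fin_cases i <;> simp [Ψx, spinOp_one_mulVec] <;> ring
  have hzero : SpinOp 1 *ᵥ Ψx - Ψx = 0 ↔ A = 0 ∧ B = 0 := by
    rw [hdiff]
    constructor
    · intro h
      exact ofReal_sub_I_mul_ofReal_eq_zero_iff.mp (by simpa using congrFun h 1)
    · rintro ⟨rfl, rfl⟩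
      ext i
      fin_cases i <;> simp
  refine ⟨hdiff, hzero, fun hne heq => hne ?_⟩
  obtain ⟨rfl, rfl⟩ := hzero.mp (sub_eq_zero.mpr heq)
  rfl
end
end

section
/- For real 𝔸, 𝔹, let Ψ^(y)(𝔸,𝔹) = (1+i𝔸+𝔹, i, −1, −i+𝔸+i𝔹)ᵀ and Ψ^(z)(𝔸,𝔹) = (1, 0, −1, 𝔸+i𝔹)ᵀ in ℂ⁴. Then Σ² Ψ^(y)(𝔸,𝔹) − Ψ^(y)(𝔸,𝔹) = (−i𝔸−𝔹, −𝔸+i𝔹, −i𝔸+𝔹, −𝔸−i𝔹)ᵀ and Σ³ Ψ^(z)(𝔸,𝔹) − Ψ^(z)(𝔸,𝔹) = (0, 0, 0, −2(𝔸+i𝔹))ᵀ, and each of these differences is zero if and only if 𝔸 = 0 and 𝔹 = 0. In particular, whenever (𝔸,𝔹) ≠ (0,0), the initially y-polarized (respectively z-polarized) laboratory spinor is no longer an eigenvector of Σ² (respectively Σ³) with eigenvalue 1 after the passage of the gravitational wave pulse. -/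
open Matrix Complex

noncomputable section

/-! In the chiral representation γ⁵ is diagonal, so Σ³ is diagonal and Σ² only mixes the
components within each Weyl half; the explicit differences follow by multiplying out.
Their last component is −(𝔸 + i𝔹) (resp. −2(𝔸 + i𝔹)), a complex number that vanishes only
when both of its real and imaginary parts 𝔸, 𝔹 do. -/

def spinorY (A B : ℝ) : Fin 4 → ℂ := ![1 + I * (A : ℂ) + (B : ℂ), I, -1, -I + (A : ℂ) + I * (B : ℂ)]

def spinorZ (A B : ℝ) : Fin 4 → ℂ := ![1, 0, -1, (A : ℂ) + I * (B : ℂ)]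

lemma spinOp_two_eq : SpinOp 2 = !![0, -I, 0, 0; I, 0, 0, 0; 0, 0, 0, -I; 0, 0, I, 0] := by
  ext i j
  fin_cases i <;> fin_cases j <;> simp [SpinOp, γ5_eq_diagonal, γ, mul_apply, Fin.sum_univ_four]

lemma spinOp_three_eq : SpinOp 3 = diagonal ![1, -1, 1, -1] := by
  ext i j
  fin_cases i <;> fin_cases j <;> simp [SpinOp, γ5_eq_diagonal, γ, mul_apply, Fin.sum_univ_four]

lemma ofReal_add_I_mul_ofReal_eq_zero {a b : ℝ} : (a : ℂ) + I * b = 0 ↔ a = 0 ∧ b = 0 := by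
  simp [Complex.ext_iff]

lemma spinOp_two_mulVec_spinorY_sub (A B : ℝ) :
    SpinOp 2 *ᵥ spinorY A B - spinorY A B =
      ![-(I * (A : ℂ)) - (B : ℂ), -(A : ℂ) + I * (B : ℂ),
        -(I * (A : ℂ)) + (B : ℂ), -(A : ℂ) - I * (B : ℂ)] := by
  ext i
  fin_cases i <;> simp [spinOp_two_eq, spinorY] <;> ring_nf <;> simp only [I_sq] <;> ring

lemma spinOp_three_mulVec_spinorZ_sub (A B : ℝ) :
    SpinOp 3 *ᵥ spinorZ A B - spinorZ A B = ![0, 0, 0, -2 * ((A : ℂ) + I * (B : ℂ))] := by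
  ext i
  fin_cases i <;> simp [spinOp_three_eq, spinorZ, mulVec_diagonal]; ring

lemma spinOp_two_mulVec_spinorY_sub_eq_zero_iff {A B : ℝ} :
    SpinOp 2 *ᵥ spinorY A B - spinorY A B = 0 ↔ A = 0 ∧ B = 0 := by
  rw [spinOp_two_mulVec_spinorY_sub]
  refine ⟨fun h ↦ ofReal_add_I_mul_ofReal_eq_zero.1 ?_, fun ⟨hA, hB⟩ ↦ by simp [hA, hB]⟩
  have h3 : -(A : ℂ) - I * B = 0 := congrFun h 3
  linear_combination -h3

lemma spinOp_three_mulVec_spinorZ_sub_eq_zero_iff {A B : ℝ} :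
    SpinOp 3 *ᵥ spinorZ A B - spinorZ A B = 0 ↔ A = 0 ∧ B = 0 := by
  simp [spinOp_three_mulVec_spinorZ_sub, ← ofReal_add_I_mul_ofReal_eq_zero]

/-- For the initially y- and z-polarized laboratory spinors in the post-wave
region: Σ²Ψ^(y) − Ψ^(y) and Σ³Ψ^(z) − Ψ^(z) have the stated values, each
vanishes iff 𝔸 = 0 and 𝔹 = 0, and in particular for (𝔸,𝔹) ≠ (0,0) neither
spinor is an eigenvector of its spin operator with eigenvalue 1. -/
theorem yz_polarization_destroyed (A B : ℝ) :
    (let Ψy : Fin 4 → ℂ := ![1 + I * (A : ℂ) + (B : ℂ), I, -1, -I + (A : ℂ) + I * (B : ℂ)]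
    let Ψz : Fin 4 → ℂ := ![1, 0, -1, (A : ℂ) + I * (B : ℂ)]
    ((SpinOp 2).mulVec Ψy - Ψy =
        ![-(I * (A : ℂ)) - (B : ℂ), -(A : ℂ) + I * (B : ℂ),
          -(I * (A : ℂ)) + (B : ℂ), -(A : ℂ) - I * (B : ℂ)]) ∧
      ((SpinOp 2).mulVec Ψy - Ψy = 0 ↔ A = 0 ∧ B = 0) ∧
      ((A, B) ≠ ((0 : ℝ), (0 : ℝ)) → (SpinOp 2).mulVec Ψy ≠ Ψy) ∧
      ((SpinOp 3).mulVec Ψz - Ψz = ![0, 0, 0, -2 * ((A : ℂ) + I * (B : ℂ))]) ∧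
      ((SpinOp 3).mulVec Ψz - Ψz = 0 ↔ A = 0 ∧ B = 0) ∧
      ((A, B) ≠ ((0 : ℝ), (0 : ℝ)) → (SpinOp 3).mulVec Ψz ≠ Ψz)) := by
  have hy0 := spinOp_two_mulVec_spinorY_sub_eq_zero_iff (A := A) (B := B)
  have hz0 := spinOp_three_mulVec_spinorZ_sub_eq_zero_iff (A := A) (B := B)
  refine ⟨spinOp_two_mulVec_spinorY_sub A B, hy0, fun hAB h ↦ hAB ?_,
    spinOp_three_mulVec_spinorZ_sub A B, hz0, fun hAB h ↦ hAB ?_⟩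
  · simpa using hy0.1 (sub_eq_zero.2 h)
  · simpa using hz0.1 (sub_eq_zero.2 h)
end
end

section
/- Let 𝔸, 𝔹 be real with (𝔸,𝔹) ≠ (0,0), and let Ψ denote any one of the spinors Ψ^(x)(𝔸,𝔹) = (1+𝔸−i𝔹, 1, −1, −1+𝔸+i𝔹)ᵀ, Ψ^(y)(𝔸,𝔹) = (1+i𝔸+𝔹, i, −1, −i+𝔸+i𝔹)ᵀ, Ψ^(z)(𝔸,𝔹) = (1, 0, −1, 𝔸+i𝔹)ᵀ, with A the corresponding index 1, 2, 3. Then for every pair (Λ, L) satisfying the spinor consistency relations, setting Σ̄^A = L Σ^A L⁻¹, one has Σ̄^A (LΨ) ≠ LΨ. That is, no Lorentz-transformed Minkowski tetrad in the post-wave region makes the spinor an eigenvector of the corresponding stationary spin operator with eigenvalue 1: the gravitational wave pulse depolarizes the Dirac particle. -/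
/-!
Conjugating by the invertible `L` turns `Σ̄^A (LΨ) = LΨ` into `Σ^A Ψ = Ψ`. In the chiral
representation `Σ^K = diag(σ^K, σ^K)`, and a single component of `Σ^A Ψ = Ψ` (the first for
`Ψ^(x)` and `Ψ^(y)`, the last for `Ψ^(z)`) already forces `𝔸 = 𝔹 = 0`.
-/

open Matrix Complex

noncomputable section

namespace Matrix

variable {m R : Type*} [Fintype m] [DecidableEq m] [CommRing R]

theorem conj_mulVec_mulVec {L : Matrix m m R} (hL : IsUnit L.det) (S : Matrix m m R) (v : m → R) :
    (L * S * L⁻¹) *ᵥ (L *ᵥ v) = L *ᵥ (S *ᵥ v) := by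
  rw [mulVec_mulVec, nonsing_inv_mul_cancel_right L (L * S) hL, ← mulVec_mulVec]

theorem conj_mulVec_mulVec_eq_iff {L : Matrix m m R} (hL : IsUnit L.det) (S : Matrix m m R)
    (v : m → R) :
    (L * S * L⁻¹) *ᵥ (L *ᵥ v) = L *ᵥ v ↔ S *ᵥ v = v := by
  rw [conj_mulVec_mulVec hL]
  exact (mulVec_injective_of_isUnit ((isUnit_iff_isUnit_det L).2 hL)).eq_iff

end Matrix

theorem γ5_eq : γ5 = !![1,0,0,0; 0,1,0,0; 0,0,-1,0; 0,0,0,-1] := by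
  ext i j
  fin_cases i <;> fin_cases j <;> simp [γ5, γ]

theorem spinOp_one : SpinOp 1 = !![0,1,0,0; 1,0,0,0; 0,0,0,1; 0,0,1,0] := by
  ext i j
  fin_cases i <;> fin_cases j <;> simp [SpinOp, γ5_eq, γ, mul_apply, Fin.sum_univ_four]

theorem spinOp_two : SpinOp 2 = !![0,-I,0,0; I,0,0,0; 0,0,0,-I; 0,0,I,0] := by
  ext i j
  fin_cases i <;> fin_cases j <;> simp [SpinOp, γ5_eq, γ, mul_apply, Fin.sum_univ_four]

theorem spinOp_three : SpinOp 3 = !![1,0,0,0; 0,-1,0,0; 0,0,1,0; 0,0,0,-1] := by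
  ext i j
  fin_cases i <;> fin_cases j <;> simp [SpinOp, γ5_eq, γ, mul_apply, Fin.sum_univ_four]

theorem spinOp_one_mulVec_zero (v : Fin 4 → ℂ) : (SpinOp 1 *ᵥ v) 0 = v 1 := by
  simp [spinOp_one, mulVec, dotProduct, Fin.sum_univ_four]

theorem spinOp_two_mulVec_zero (v : Fin 4 → ℂ) : (SpinOp 2 *ᵥ v) 0 = -I * v 1 := by
  simp [spinOp_two, mulVec, dotProduct, Fin.sum_univ_four]

theorem spinOp_three_mulVec_three (v : Fin 4 → ℂ) : (SpinOp 3 *ᵥ v) 3 = -v 3 := by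
  simp [spinOp_three, mulVec, dotProduct, Fin.sum_univ_four]

/-- Depolarization by a gravitational wave pulse: for (𝔸,𝔹) ≠ (0,0), for every
pair (Λ, L) satisfying the spinor consistency relations, with Σ̄^A = L Σ^A L⁻¹,
none of the post-wave laboratory spinors Ψ^(x), Ψ^(y), Ψ^(z) (with the
corresponding index A = 1, 2, 3) satisfies Σ̄^A (LΨ) = LΨ. -/
theorem wave_depolarizes (A B : ℝ) (hAB : (A, B) ≠ ((0 : ℝ), (0 : ℝ)))
    (Λ : Matrix (Fin 4) (Fin 4) ℝ) (L : Matrix (Fin 4) (Fin 4) ℂ)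
    (h : SpinorConsistent Λ L) :
    (let Ψx : Fin 4 → ℂ := ![1 + (A : ℂ) - I * (B : ℂ), 1, -1, -1 + (A : ℂ) + I * (B : ℂ)]
    let Ψy : Fin 4 → ℂ := ![1 + I * (A : ℂ) + (B : ℂ), I, -1, -I + (A : ℂ) + I * (B : ℂ)]
    let Ψz : Fin 4 → ℂ := ![1, 0, -1, (A : ℂ) + I * (B : ℂ)]
    ((L * SpinOp 1 * L⁻¹).mulVec (L.mulVec Ψx) ≠ L.mulVec Ψx) ∧
    ((L * SpinOp 2 * L⁻¹).mulVec (L.mulVec Ψy) ≠ L.mulVec Ψy) ∧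
    ((L * SpinOp 3 * L⁻¹).mulVec (L.mulVec Ψz) ≠ L.mulVec Ψz)) := by
  obtain ⟨-, hL, -, -⟩ := h
  intro Ψx Ψy Ψz
  simp only [ne_eq, conj_mulVec_mulVec_eq_iff hL]
  refine ⟨fun hx => hAB ?_, fun hy => hAB ?_, fun hz => hAB ?_⟩
  · simpa [Ψx, spinOp_one_mulVec_zero, Complex.ext_iff] using congrFun hx 0
  · simpa [Ψy, spinOp_two_mulVec_zero, Complex.ext_iff, and_comm, eq_comm (a := (0 : ℝ))] using
      congrFun hy 0
  · simpa [Ψz, spinOp_three_mulVec_three, Complex.ext_iff, neg_eq_self] using congrFun hz 3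
end
end
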